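/- Let D be a positive, 1-periodic, C² function, let r ≡ r₀ be a constant function, and let q ∈ ℝ. If (k, ψ) is a principal eigenpair of L_q^0[r₀;D], then k = r₀. In particular, for constant growth rate the ability of persistence k_q^0[r₀;D] does not depend on q. -/

import Mathlib

open Real MeasureTheory Set Filter Topology

noncomputable section

/-- The operator `L_q^λ[r;D]` acting on C² functions `ψ`:
`(L_q^λ[r;D]ψ)(x) = D ψ'' + ((1+q)D' − 2λD) ψ' + (qD'' + λ²D − (1+q)λD' + r) ψ`. -/
def Lop (q lam : ℝ) (r D ψ : ℝ → ℝ) (x : ℝ) : ℝ :=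
  D x * deriv (deriv ψ) x + ((1 + q) * deriv D x - 2 * lam * D x) * deriv ψ x +
    (q * deriv (deriv D) x + lam ^ 2 * D x - (1 + q) * lam * deriv D x + r x) * ψ x

/-- `(k, ψ)` is a principal eigenpair of `L_q^λ[r;D]`: `ψ` is a positive, 1-periodic,
C² function with `L_q^λ[r;D]ψ = kψ`. -/
def IsEigenpair (q lam : ℝ) (r D : ℝ → ℝ) (k : ℝ) (ψ : ℝ → ℝ) : Prop :=
  ContDiff ℝ 2 ψ ∧ (∀ x, 0 < ψ x) ∧ Function.Periodic ψ 1 ∧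
    ∀ x, Lop q lam r D ψ x = k * ψ x

/-- The Freidlin–Gärtner infimum `inf_{λ>0} k(λ)/λ`, as an extended real number. -/
def speed (k : ℝ → ℝ) : EReal := ⨅ l : {l : ℝ // 0 < l}, ((k l.1 / l.1 : ℝ) : EReal)

/-!
At `λ = 0` the operator is in divergence form,
`L_q^0[r;D]ψ = (D ψ' + q D' ψ)' + r ψ`. For constant `r = r₀` and an eigenpair `(k, ψ)` this
says that the periodic flux `D ψ' + q D' ψ` has derivative `(k - r₀) ψ`; integrating over one
period gives `(k - r₀) ∫₀¹ ψ = 0`, and `ψ > 0` forces `k = r₀`.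
-/

theorem Function.Periodic.deriv {𝕜 F : Type*} [NontriviallyNormedField 𝕜]
    [NormedAddCommGroup F] [NormedSpace 𝕜 F] {f : 𝕜 → F} {c : 𝕜} (h : Function.Periodic f c) :
    Function.Periodic (deriv f) c := fun x => by
  rw [← deriv_comp_add_const, funext h]

theorem eq_zero_of_periodic_of_hasDerivAt_const_mul {g f : ℝ → ℝ} {T c : ℝ}
    (hg : Function.Periodic g T) (hT : 0 < T) (hf : Continuous f) (hfpos : ∀ x, 0 < f x)
    (hderiv : ∀ x, HasDerivAt g (c * f x) x) : c = 0 := by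
  have hint : c * ∫ x in (0 : ℝ)..T, f x = 0 := by
    rw [← intervalIntegral.integral_const_mul,
      intervalIntegral.integral_eq_sub_of_hasDerivAt (fun x _ => hderiv x)
        ((hf.const_mul c).intervalIntegrable 0 T), hg.eq, sub_self]
  have hpos : 0 < ∫ x in (0 : ℝ)..T, f x :=
    intervalIntegral.intervalIntegral_pos_of_pos (hf.intervalIntegrable 0 T) hfpos hT
  exact (mul_eq_zero.mp hint).resolve_right hpos.ne'

section Flux

variable (q : ℝ) (D ψ : ℝ → ℝ)

def flux (x : ℝ) : ℝ := D x * deriv ψ x + q * (deriv D x * ψ x)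

variable {D ψ}

theorem Function.Periodic.flux {T : ℝ} (hD : Function.Periodic D T)
    (hψ : Function.Periodic ψ T) : Function.Periodic (flux q D ψ) T := fun x => by
  simp only [_root_.flux, hD x, hψ x, hD.deriv x, hψ.deriv x]

theorem hasDerivAt_flux (r : ℝ → ℝ) (hD : ContDiff ℝ 2 D) (hψ : ContDiff ℝ 2 ψ) (x : ℝ) :
    HasDerivAt (flux q D ψ) (Lop q 0 r D ψ x - r x * ψ x) x := by
  have hD₁ := (hD.differentiable two_ne_zero x).hasDerivAt
  have hψ₁ := (hψ.differentiable two_ne_zero x).hasDerivAt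
  have hD₂ : HasDerivAt (deriv D) (deriv (deriv D) x) x :=
    ((hD.iterate_deriv' 1 1).differentiable one_ne_zero x).hasDerivAt
  have hψ₂ : HasDerivAt (deriv ψ) (deriv (deriv ψ) x) x :=
    ((hψ.iterate_deriv' 1 1).differentiable one_ne_zero x).hasDerivAt
  refine ((hD₁.mul hψ₂).add ((hD₂.mul hψ₁).const_mul q)).congr_deriv ?_
  rw [Lop]
  ring

end Flux

theorem stmt_15_general (D : ℝ → ℝ) (hD : ContDiff ℝ 2 D)
    (hDper : Function.Periodic D 1) (r₀ q k : ℝ) (ψ : ℝ → ℝ)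
    (hψ : IsEigenpair q 0 (fun _ => r₀) D k ψ) :
    k = r₀ := by
  obtain ⟨hψC2, hψpos, hψper, heigen⟩ := hψ
  refine sub_eq_zero.mp (eq_zero_of_periodic_of_hasDerivAt_const_mul (hDper.flux q hψper)
    one_pos hψC2.continuous hψpos fun x => ?_)
  exact (hasDerivAt_flux q (fun _ => r₀) hD hψC2 x).congr_deriv (by rw [heigen x, sub_mul])

/-- Theorem `monotonicity (i)`. For a constant growth rate `r₀`, the
principal eigenvalue of `L_q^0[r₀;D]` equals `r₀`, independently of `q`. -/
theorem stmt_15 (D : ℝ → ℝ) (hD : ContDiff ℝ 2 D) (hDpos : ∀ x, 0 < D x)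
    (hDper : Function.Periodic D 1) (r₀ q k : ℝ) (ψ : ℝ → ℝ)
    (hψ : IsEigenpair q 0 (fun _ => r₀) D k ψ) :
    k = r₀ :=
  stmt_15_general D hD hDper r₀ q k ψ hψ
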